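/- arXiv:1707.00789 — 4 statements merged into one kernel-verified Lean document; each statement's English description precedes it below -/
import Mathlib

section
/- Let O' ⊂ O ⊂ O_k be orders in a number field k (or étale algebra over ℚ), with conductors f' and f respectively (the conductor of an order is the largest O_k-ideal contained in it). Then f' ⊆ f. Moreover, if p is a prime number dividing N(f) but not dividing the index (O : O'), then the p-parts of f' and f coincide. -/
/-!
The index `n = (O : O')` kills `O / O'`, so `n f ⊆ f' ⊆ f`. If `p ∤ n`, then `n` is a unit
modulo `p ^ m`, so `f` and `f'` already agree modulo `p ^ m` for every `m`.
-/

section Preliminaries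

variable {k : Type*} [CommRing k]

/-- The largest `B`-ideal contained in the subring `A` of `k` (for `A ≤ B` this is the
conductor of the order `A`), realized as an ideal of `B`. -/
def conductorOf (A B : Subring k) : Ideal ↥B where
  carrier := {x : ↥B | ∀ y : ↥B, (x : k) * (y : k) ∈ A}
  add_mem' := by
    intro x y hx hy z
    simpa [add_mul] using A.add_mem (hx z) (hy z)
  zero_mem' := by
    intro z
    simpa using A.zero_mem
  smul_mem' := by
    intro r x hx z
    have h := hx (r * z)
    have heq : ((r • x : ↥B) : k) * (z : k) = (x : k) * ((r * z : ↥B) : k) := by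
      push_cast [smul_eq_mul]
      ring
    rw [heq]
    exact h

/-- The conductor of `A` in `B`, regarded as an ideal of the ring `A` (requires `A ≤ B`). -/
def conductorIn (A B : Subring k) (hAB : A ≤ B) : Ideal ↥A where
  carrier := {x : ↥A | ∀ y : ↥B, (x : k) * (y : k) ∈ A}
  add_mem' := by
    intro x y hx hy z
    simpa [add_mul] using A.add_mem (hx z) (hy z)
  zero_mem' := by
    intro z
    simpa using A.zero_mem
  smul_mem' := by
    intro r x hx z
    have h := hx (⟨(r : k), hAB r.2⟩ * z)
    have heq : ((r • x : ↥A) : k) * (z : k)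
        = (x : k) * (((⟨(r : k), hAB r.2⟩ : ↥B) * z : ↥B) : k) := by
      push_cast [smul_eq_mul]
      ring
    rw [heq]
    exact h

/-- The index `(B : A)` of one subring of `k` in another (as additive subgroups). -/
noncomputable def subringIndex (A B : Subring k) : ℕ :=
  AddSubgroup.relIndex A.toAddSubgroup B.toAddSubgroup

/-- The norm of an ideal: the cardinality of the quotient ring. -/
noncomputable def idealNorm {R : Type*} [CommRing R] (I : Ideal R) : ℕ :=
  Nat.card (R ⧸ I)

end Preliminaries

section Etale

-- `k` is an étale algebra over `ℚ`: a finite-dimensional reduced commutative `ℚ`-algebra.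
variable (k : Type*) [CommRing k] [Algebra ℚ k] [FiniteDimensional ℚ k] [IsReduced k]

/-- The maximal order of `k`: the integral closure of `ℤ` in `k`. -/
noncomputable def maximalOrder : Subring k := (integralClosure ℤ k).toSubring

/-- An order of `k`: a subring of the maximal order of finite (additive) index. -/
def IsOrder (O : Subring k) : Prop :=
  O ≤ maximalOrder k ∧ subringIndex O (maximalOrder k) ≠ 0

end Etale

section Conductor

variable {k : Type*} [CommRing k]

theorem conductorOf_mono {A A' B : Subring k} (h : A ≤ A') :
    conductorOf A B ≤ conductorOf A' B :=
  fun _ hx y => h (hx y)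

theorem natCast_subringIndex_mul_mem_conductorOf {A A' B : Subring k} {x : ↥B}
    (hx : x ∈ conductorOf A' B) : (subringIndex A A' : ↥B) * x ∈ conductorOf A B := by
  intro y
  have h : subringIndex A A' • ((x : k) * (y : k)) ∈ A :=
    AddSubgroup.nsmul_relIndex_mem A.toAddSubgroup (hx y)
  simpa [nsmul_eq_mul, mul_assoc] using h

end Conductor

theorem Ideal.sup_span_natCast_eq_of_coprime {R : Type*} [CommRing R] {I J : Ideal R}
    {c q : ℕ} (hIJ : I ≤ J) (hJ : ∀ x ∈ J, (c : R) * x ∈ I) (hcq : Nat.Coprime q c) :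
    I ⊔ Ideal.span {(q : R)} = J ⊔ Ideal.span {(q : R)} := by
  refine le_antisymm (sup_le_sup_right hIJ _) (sup_le (fun x hx => ?_) le_sup_right)
  obtain ⟨a, b, hab⟩ := hcq.cast (R := R)
  have hx' : x = b * ((c : R) * x) + a * (q : R) * x := by linear_combination -x * hab
  rw [hx']
  exact Submodule.add_mem_sup (I.mul_mem_left _ (hJ x hx))
    (Ideal.mul_mem_right _ _ (Ideal.mul_mem_left _ _ (Ideal.mem_span_singleton_self _)))

theorem conductor_le_and_pPart_eq_general
    (k : Type*) [CommRing k] (O O' : Subring k) (hle : O' ≤ O) :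
    conductorOf O' (maximalOrder k) ≤ conductorOf O (maximalOrder k) ∧
    ∀ p : ℕ, p.Prime → p ∣ idealNorm (conductorOf O (maximalOrder k)) →
      ¬ p ∣ subringIndex O' O →
      ∃ N : ℕ, ∀ m ≥ N,
        conductorOf O' (maximalOrder k) ⊔ Ideal.span {((p : ↥(maximalOrder k)) ^ m)}
          = conductorOf O (maximalOrder k) ⊔ Ideal.span {((p : ↥(maximalOrder k)) ^ m)} := by
  refine ⟨conductorOf_mono hle, fun p hp _ hpn => ⟨0, fun m _ => ?_⟩⟩
  have hcop : Nat.Coprime (p ^ m) (subringIndex O' O) :=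
    .pow_left m ((Nat.Prime.coprime_iff_not_dvd hp).mpr hpn)
  rw [← Nat.cast_pow]
  exact Ideal.sup_span_natCast_eq_of_coprime (conductorOf_mono hle)
    (fun _ => natCast_subringIndex_mul_mem_conductorOf) hcop

/-- Let `O' ⊆ O ⊆ O_k` be orders in an étale algebra `k` over `ℚ`, with
conductors `f'` and `f`.  Then `f' ⊆ f`, and if `p` is a prime dividing `N(f)` but not
dividing the index `(O : O')`, then the `p`-parts of `f'` and `f` coincide (i.e.
`f' + p^m O_k = f + p^m O_k` for all sufficiently large `m`). -/
theorem conductor_le_and_pPart_eq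
    (k : Type*) [CommRing k] [Algebra ℚ k] [FiniteDimensional ℚ k] [IsReduced k]
    (O O' : Subring k) (hO : IsOrder k O) (hO' : IsOrder k O') (hle : O' ≤ O) :
    conductorOf O' (maximalOrder k) ≤ conductorOf O (maximalOrder k) ∧
    ∀ p : ℕ, p.Prime → p ∣ idealNorm (conductorOf O (maximalOrder k)) →
      ¬ p ∣ subringIndex O' O →
      ∃ N : ℕ, ∀ m ≥ N,
        conductorOf O' (maximalOrder k) ⊔ Ideal.span {((p : ↥(maximalOrder k)) ^ m)}
          = conductorOf O (maximalOrder k) ⊔ Ideal.span {((p : ↥(maximalOrder k)) ^ m)} :=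
  conductor_le_and_pPart_eq_general k O O' hle
end

section
/- Let O' ⊂ O ⊂ O_k be orders and p a prime number not dividing the index (O_k : O). Let g be the largest O-ideal contained in O', and assume (O : g) is a power of p. Then g·O_k is the p-part of the conductor of O'. Moreover g·O_k ∩ O = g and O/g ≅ O_k/(g·O_k). -/
/-
Let `n = (O_k : O)`, so that `n O_k ⊆ O`, and `p ^ r = (O : g)`, so that `p ^ r ∈ g`. As `n` is prime
to `p`, there is a Bézout relation `a n + b p ^ m = 1`. Multiplication by `n` carries `g O_k` into the
conductor `f` of `O'`, so every `x ∈ g O_k` splits as `a n x + b p ^ m x ∈ f + p ^ m O_k`; the same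
splitting shows `g O_k ∩ O = g`. Modulo `g O_k ∋ p ^ r`, every `z ∈ O_k` is congruent to `a n z ∈ O`,
so `O/g → O_k/g O_k` is onto.
-/

theorem Ideal.mem_of_isCoprime_of_mul_mem {R : Type*} [CommRing R] {I : Ideal R} {a b x : R}
    (hab : IsCoprime a b) (ha : a * x ∈ I) (hb : b * x ∈ I) : x ∈ I := by
  obtain ⟨u, v, huv⟩ := hab
  have hx : x = u * (a * x) + v * (b * x) := by linear_combination (-x) * huv
  rw [hx]
  exact I.add_mem (I.mul_mem_left u ha) (I.mul_mem_left v hb)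

theorem natCast_idealNorm_mem {R : Type*} [CommRing R] (I : Ideal R) :
    (idealNorm I : R) ∈ I := by
  rw [← Ideal.Quotient.eq_zero_iff_mem, map_natCast, ← nsmul_one]
  exact card_nsmul_eq_zero'

theorem Ideal.natCast_mem_map {R S : Type*} [CommRing R] [CommRing S] (f : R →+* S)
    {I : Ideal R} {q : ℕ} (hq : (q : R) ∈ I) : (q : S) ∈ I.map f :=
  map_natCast f q ▸ Ideal.mem_map_of_mem f hq

section Conductor

variable {k : Type*} [CommRing k]

theorem natCast_subringIndex_mul_mem (A B : Subring k) {y : k} (hy : y ∈ B) :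
    (subringIndex A B : k) * y ∈ A := by
  have h := AddSubgroup.nsmul_index_mem
    (A.toAddSubgroup.addSubgroupOf B.toAddSubgroup) (⟨y, hy⟩ : B.toAddSubgroup)
  rw [AddSubgroup.mem_addSubgroupOf, AddSubgroup.coe_nsmul, nsmul_eq_mul] at h
  exact h

theorem mem_conductorOf {A B : Subring k} {x : B} :
    x ∈ conductorOf A B ↔ ∀ y : B, (x : k) * (y : k) ∈ A :=
  Iff.rfl

theorem coe_mem_of_mem_conductorOf {A B : Subring k} {x : B} (hx : x ∈ conductorOf A B) :
    (x : k) ∈ A := by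
  simpa using hx 1

variable {O' O B : Subring k}

theorem comap_inclusion_conductorOf_le (hOB : O ≤ B) :
    Ideal.comap (Subring.inclusion hOB) (conductorOf O' B) ≤ conductorOf O' O :=
  fun _ hx y => hx ⟨y, hOB y.2⟩

theorem conductorOf_le_map_inclusion (hO'O : O' ≤ O) (hOB : O ≤ B) :
    conductorOf O' B ≤ Ideal.map (Subring.inclusion hOB) (conductorOf O' O) := by
  intro z hz
  have hzO : (z : k) ∈ O := hO'O (coe_mem_of_mem_conductorOf hz)
  exact Ideal.mem_map_of_mem (Subring.inclusion hOB) (x := ⟨z, hzO⟩)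
    (comap_inclusion_conductorOf_le hOB hz)

theorem natCast_mul_mem_conductorOf_of_mem_map (hOB : O ≤ B) {n : ℕ}
    (hn : ∀ y ∈ B, (n : k) * y ∈ O) {z : B}
    (hz : z ∈ Ideal.map (Subring.inclusion hOB) (conductorOf O' O)) :
    (n : B) * z ∈ conductorOf O' B := by
  suffices h : Ideal.map (Subring.inclusion hOB) (conductorOf O' O)
      ≤ (conductorOf O' B).colon {(n : B)} by
    simpa only [Submodule.mem_colon_singleton, smul_eq_mul, mul_comm] using h hz
  rw [Ideal.map_le_iff_le_comap]
  intro x hx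
  rw [Ideal.mem_comap, Submodule.mem_colon_singleton, mem_conductorOf]
  intro w
  have hxw : (x : k) * ((n : k) * w) ∈ O' := hx ⟨_, hn w w.2⟩
  simpa only [smul_eq_mul, Subring.coe_mul, Subring.coe_natCast, Subring.coe_inclusion,
    mul_comm (x : k), mul_assoc] using hxw

theorem comap_map_inclusion_conductorOf (hOB : O ≤ B) {n q : ℕ}
    (hn : ∀ y ∈ B, (n : k) * y ∈ O) (hq : (q : O) ∈ conductorOf O' O) (hnq : n.Coprime q) :
    Ideal.comap (Subring.inclusion hOB)
      (Ideal.map (Subring.inclusion hOB) (conductorOf O' O)) = conductorOf O' O := by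
  refine le_antisymm (fun x hx => ?_) Ideal.le_comap_map
  have hnx : (n : O) * x ∈ conductorOf O' O := by
    apply comap_inclusion_conductorOf_le hOB
    rw [Ideal.mem_comap, map_mul, map_natCast]
    exact natCast_mul_mem_conductorOf_of_mem_map hOB hn hx
  exact Ideal.mem_of_isCoprime_of_mul_mem hnq.cast hnx (Ideal.mul_mem_right x _ hq)

theorem conductorOf_sup_span_eq_map_inclusion (hO'O : O' ≤ O) (hOB : O ≤ B) {n q : ℕ}
    (hn : ∀ y ∈ B, (n : k) * y ∈ O) (hq : (q : O) ∈ conductorOf O' O) (hnq : n.Coprime q) :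
    conductorOf O' B ⊔ Ideal.span {(q : B)}
      = Ideal.map (Subring.inclusion hOB) (conductorOf O' O) := by
  apply le_antisymm
  · refine sup_le (conductorOf_le_map_inclusion hO'O hOB) ?_
    rw [Ideal.span_singleton_le_iff_mem]
    exact Ideal.natCast_mem_map _ hq
  · rw [Ideal.map_le_iff_le_comap]
    intro x hx
    exact Ideal.mem_of_isCoprime_of_mul_mem hnq.cast
      (Ideal.mem_sup_left
        (natCast_mul_mem_conductorOf_of_mem_map hOB hn (Ideal.mem_map_of_mem _ hx)))
      (Ideal.mem_sup_right (by
        rw [map_mul, map_natCast]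
        exact Ideal.mul_mem_right _ _ (Ideal.mem_span_singleton_self _)))

/-- Modulo an ideal `J` containing `q`, an element `z` of `B` is congruent to `a n z ∈ O`,
where `a n + b q = 1`. -/
theorem quotientMap_inclusion_surjective (hOB : O ≤ B) {n q : ℕ}
    (hn : ∀ y ∈ B, (n : k) * y ∈ O) (hnq : n.Coprime q) {I : Ideal O} {J : Ideal B}
    (hIJ : I ≤ J.comap (Subring.inclusion hOB)) (hqJ : (q : B) ∈ J) :
    Function.Surjective (Ideal.quotientMap J (Subring.inclusion hOB) hIJ) := by
  intro zbar
  obtain ⟨z, rfl⟩ := Ideal.Quotient.mk_surjective zbar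
  obtain ⟨a, b, hab⟩ := hnq.isCoprime
  let x : O := a * ⟨n * z, hn z z.2⟩
  refine ⟨Ideal.Quotient.mk I x, ?_⟩
  rw [Ideal.quotientMap_mk, Ideal.Quotient.eq]
  have hx : Subring.inclusion hOB x - z = -(b * (q * z)) := by
    have hab' := congrArg (Int.cast : ℤ → B) hab
    push_cast at hab'
    have hιx : Subring.inclusion hOB x = a * (n * z) := Subtype.ext (by simp [x])
    linear_combination hιx + z * hab'
  rw [hx]
  exact J.neg_mem (J.mul_mem_left _ (J.mul_mem_right z hqJ))

noncomputable def conductorOfQuotientEquiv (hOB : O ≤ B) {n q : ℕ}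
    (hn : ∀ y ∈ B, (n : k) * y ∈ O) (hq : (q : O) ∈ conductorOf O' O) (hnq : n.Coprime q) :
    (O ⧸ conductorOf O' O)
      ≃+* (B ⧸ Ideal.map (Subring.inclusion hOB) (conductorOf O' O)) :=
  RingEquiv.ofBijective (Ideal.quotientMap _ _ Ideal.le_comap_map)
    ⟨Ideal.quotientMap_injective' (comap_map_inclusion_conductorOf hOB hn hq hnq).le,
      quotientMap_inclusion_surjective hOB hn hnq _ (Ideal.natCast_mem_map _ hq)⟩

end Conductor

theorem extension_of_relative_conductor_general
    (k : Type*) [CommRing k]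
    (O O' : Subring k) (hO : IsOrder k O) (hle : O' ≤ O)
    (p : ℕ) (hp : p.Prime) (hpO : ¬ p ∣ subringIndex O (maximalOrder k))
    (hpow : ∃ r : ℕ, idealNorm (conductorOf O' O) = p ^ r) :
    (∃ N : ℕ, ∀ m ≥ N,
      conductorOf O' (maximalOrder k) ⊔ Ideal.span {((p : ↥(maximalOrder k)) ^ m)}
        = Ideal.map (Subring.inclusion hO.1) (conductorOf O' O)) ∧
    Ideal.comap (Subring.inclusion hO.1)
        (Ideal.map (Subring.inclusion hO.1) (conductorOf O' O)) = conductorOf O' O ∧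
    Nonempty ((↥O ⧸ conductorOf O' O)
      ≃+* (↥(maximalOrder k) ⧸ Ideal.map (Subring.inclusion hO.1) (conductorOf O' O))) := by
  obtain ⟨r, hr⟩ := hpow
  have hn : ∀ y ∈ maximalOrder k, (subringIndex O (maximalOrder k) : k) * y ∈ O :=
    fun _ hy => natCast_subringIndex_mul_mem O _ hy
  have hcop : ∀ m, (subringIndex O (maximalOrder k)).Coprime (p ^ m) :=
    fun m => ((hp.coprime_iff_not_dvd.mpr hpO).symm).pow_right m
  have hpm : ∀ m ≥ r, ((p ^ m : ℕ) : O) ∈ conductorOf O' O := by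
    intro m hm
    have hpr : ((p : O) ^ r) ∈ conductorOf O' O := by
      exact_mod_cast hr ▸ natCast_idealNorm_mem (conductorOf O' O)
    exact_mod_cast (conductorOf O' O).pow_mem_of_pow_mem hpr hm
  refine ⟨⟨r, fun m hm => ?_⟩, comap_map_inclusion_conductorOf hO.1 hn (hpm r le_rfl) (hcop r),
    ⟨conductorOfQuotientEquiv hO.1 hn (hpm r le_rfl) (hcop r)⟩⟩
  simpa only [Nat.cast_pow] using
    conductorOf_sup_span_eq_map_inclusion hle hO.1 hn (hpm m hm) (hcop m)

/-- Let `O' ⊆ O ⊆ O_k` be orders and `p` a prime not dividing `(O_k : O)`.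
Let `g` be the largest `O`-ideal contained in `O'`, and assume `(O : g)` is a power of `p`.
Then `g O_k` is the `p`-part of the conductor of `O'`, `g O_k ∩ O = g`, and
`O/g ≅ O_k/(g O_k)`. -/
theorem extension_of_relative_conductor
    (k : Type*) [CommRing k] [Algebra ℚ k] [FiniteDimensional ℚ k] [IsReduced k]
    (O O' : Subring k) (hO : IsOrder k O) (hO' : IsOrder k O') (hle : O' ≤ O)
    (p : ℕ) (hp : p.Prime) (hpO : ¬ p ∣ subringIndex O (maximalOrder k))
    (hpow : ∃ r : ℕ, idealNorm (conductorOf O' O) = p ^ r) :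
    (∃ N : ℕ, ∀ m ≥ N,
      conductorOf O' (maximalOrder k) ⊔ Ideal.span {((p : ↥(maximalOrder k)) ^ m)}
        = Ideal.map (Subring.inclusion hO.1) (conductorOf O' O)) ∧
    Ideal.comap (Subring.inclusion hO.1)
        (Ideal.map (Subring.inclusion hO.1) (conductorOf O' O)) = conductorOf O' O ∧
    Nonempty ((↥O ⧸ conductorOf O' O)
      ≃+* (↥(maximalOrder k) ⧸ Ideal.map (Subring.inclusion hO.1) (conductorOf O' O))) :=
  extension_of_relative_conductor_general k O O' hO hle p hp hpO hpow
end

section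
/- Let F and F' be integral binary cubic forms such that the cubic ring R(F') is a subring of R(F). Then there exists a 2×2 integer matrix δ with |det δ| = (R(F) : R(F')) such that F' = δ·F, where the action is (δ·F)(u) = (det δ)^{-1} F(uδ). -/
/-!
Write the basis elements `ω', θ'` of `R(F')` in the basis `1, ω, θ` of `R(F)` as
`ω' = p + qω + rθ`, `θ' = s + tω + uθ`, and take `δ = !![q, r; t, u]`. Both bases contain `1`,
so the change-of-basis matrix is block triangular and the index `(R(F) : R(F'))`, being the
absolute value of its determinant, is `|det δ|`. Comparing `ω`- and `θ`-coordinates in the three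
multiplication laws of `R(F')` gives six integer identities in `p, q, r, s, t, u`, and
`det δ · F'(x, y) = F((x, y) δ)` is a linear combination of them.
-/

/-- `R` is the cubic ring attached (by the Delone–Faddeev correspondence) to the integral
binary cubic form `F(u) = a u₁³ + b u₁²u₂ + c u₁u₂² + d u₂³`:  it has a `ℤ`-basis
`{1, ω, θ}` with `ω² = -ac + bω - aθ`, `θ² = -bd + dω - cθ`, `ωθ = -ad`. -/
def IsCubicRingOf (R : Type*) [CommRing R] (a b c d : ℤ) : Prop :=
  ∃ e : Module.Basis (Fin 3) ℤ R, e 0 = 1 ∧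
    (e 1) * (e 1) = (-(a * c)) • (1 : R) + b • (e 1) + (-a) • (e 2) ∧
    (e 2) * (e 2) = (-(b * d)) • (1 : R) + d • (e 1) + (-c) • (e 2) ∧
    (e 1) * (e 2) = (-(a * d)) • (1 : R)

open Module

def cubicForm (a b c d x y : ℤ) : ℤ :=
  a * x ^ 3 + b * x ^ 2 * y + c * x * y ^ 2 + d * y ^ 3

theorem det_mul_cubicForm_of_coords {a b c d a' b' c' d' p q r s t u : ℤ}
    (hww₁ : b' * q - a' * t = 2 * p * q + b * q ^ 2 + d * r ^ 2)
    (hww₂ : b' * r - a' * u = 2 * p * r - a * q ^ 2 - c * r ^ 2)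
    (hzz₁ : d' * q - c' * t = 2 * s * t + b * t ^ 2 + d * u ^ 2)
    (hzz₂ : d' * r - c' * u = 2 * s * u - a * t ^ 2 - c * u ^ 2)
    (hwz₁ : 0 = p * t + q * s + b * q * t + d * r * u)
    (hwz₂ : 0 = p * u + r * s - a * q * t - c * r * u) (x y : ℤ) :
    (q * u - r * t) * cubicForm a' b' c' d' x y
      = cubicForm a b c d (x * q + y * t) (x * r + y * u) := by
  unfold cubicForm
  linear_combination
    x ^ 3 * (r * hww₁ - q * hww₂)
      + x ^ 2 * y * (u * hww₁ - t * hww₂ + 2 * r * hwz₁ - 2 * q * hwz₂)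
      + x * y ^ 2 * (r * hzz₁ - q * hzz₂ + 2 * u * hwz₁ - 2 * t * hwz₂)
      + y ^ 3 * (u * hzz₁ - t * hzz₂)

section Basis

variable {M : Type*} [AddCommGroup M]

theorem Module.Basis.sum_repr_fin_three (e : Basis (Fin 3) ℤ M) (x : M) :
    e.repr x 0 • e 0 + e.repr x 1 • e 1 + e.repr x 2 • e 2 = x := by
  rw [← Fin.sum_univ_three (fun i ↦ e.repr x i • e i), e.sum_repr]

noncomputable def Module.Basis.coordMatrix (e : Basis (Fin 3) ℤ M) (w z : M) :
    Matrix (Fin 2) (Fin 2) ℤ :=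
  !![e.repr w 1, e.repr w 2; e.repr z 1, e.repr z 2]

theorem AddSubgroup.index_eq_natAbs_det_coordMatrix (e : Basis (Fin 3) ℤ M) (N : AddSubgroup M)
    (f : Basis (Fin 3) ℤ N) (hf0 : (f 0 : M) = e 0) :
    N.index = (e.coordMatrix (f 1) (f 2)).det.natAbs := by
  rw [N.index_eq_natAbs_det e f, Basis.det_apply, Matrix.det_fin_three,
    Basis.coordMatrix, Matrix.det_fin_two_of]
  simp only [Basis.toMatrix_apply, hf0, Basis.repr_self, Finsupp.single_apply, Fin.reduceEq,
    if_true, if_false, one_mul, mul_zero, zero_mul, sub_zero, add_zero]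
  ring_nf

end Basis

section CubicRelations

variable {R : Type*} [CommRing R]

def CubicRelations (a b c d : ℤ) (ω θ : R) : Prop :=
  ω * ω = (-(a * c)) • (1 : R) + b • ω + (-a) • θ ∧
    θ * θ = (-(b * d)) • (1 : R) + d • ω + (-c) • θ ∧
    ω * θ = (-(a * d)) • (1 : R)

theorem isCubicRingOf_iff {a b c d : ℤ} :
    IsCubicRingOf R a b c d ↔
      ∃ e : Basis (Fin 3) ℤ R, e 0 = 1 ∧ CubicRelations a b c d (e 1) (e 2) :=
  Iff.rfl

theorem CubicRelations.map {R' : Type*} [CommRing R'] {a b c d : ℤ} {ω θ : R}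
    (h : CubicRelations a b c d ω θ) (φ : R →+* R') : CubicRelations a b c d (φ ω) (φ θ) := by
  obtain ⟨hωω, hθθ, hωθ⟩ := h
  refine ⟨?_, ?_, ?_⟩ <;>
    simp only [← map_mul, hωω, hθθ, hωθ, map_add, map_zsmul, map_one]

theorem CubicRelations.mul_eq {a b c d : ℤ} {ω θ : R} (h : CubicRelations a b c d ω θ)
    (x₀ x₁ x₂ y₀ y₁ y₂ : ℤ) :
    (x₀ • 1 + x₁ • ω + x₂ • θ) * (y₀ • 1 + y₁ • ω + y₂ • θ) =
      (x₀ * y₀ - a * c * x₁ * y₁ - b * d * x₂ * y₂ - a * d * (x₁ * y₂ + x₂ * y₁)) • (1 : R)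
        + (x₀ * y₁ + x₁ * y₀ + b * x₁ * y₁ + d * x₂ * y₂) • ω
        + (x₀ * y₂ + x₂ * y₀ - a * x₁ * y₁ - c * x₂ * y₂) • θ := by
  obtain ⟨hωω, hθθ, hωθ⟩ := h
  simp only [zsmul_eq_mul, mul_one] at hωω hθθ hωθ ⊢
  push_cast at hωω hθθ hωθ ⊢
  linear_combination (x₁ * y₁ : R) * hωω + (x₂ * y₂ : R) * hθθ + (x₁ * y₂ + x₂ * y₁ : R) * hωθ

theorem CubicRelations.repr_mul {a b c d : ℤ} {e : Basis (Fin 3) ℤ R} (he0 : e 0 = 1)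
    (he : CubicRelations a b c d (e 1) (e 2)) (x y : R) :
    e.repr (x * y) 1 = e.repr x 0 * e.repr y 1 + e.repr x 1 * e.repr y 0
        + b * e.repr x 1 * e.repr y 1 + d * e.repr x 2 * e.repr y 2 ∧
      e.repr (x * y) 2 = e.repr x 0 * e.repr y 2 + e.repr x 2 * e.repr y 0
        - a * e.repr x 1 * e.repr y 1 - c * e.repr x 2 * e.repr y 2 := by
  have key := he.mul_eq (e.repr x 0) (e.repr x 1) (e.repr x 2) (e.repr y 0) (e.repr y 1) (e.repr y 2)
  rw [← he0, e.sum_repr_fin_three, e.sum_repr_fin_three] at key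
  simp [key, -zsmul_eq_mul]

theorem CubicRelations.det_mul_cubicForm {a b c d a' b' c' d' : ℤ} {e : Basis (Fin 3) ℤ R}
    (he0 : e 0 = 1) (he : CubicRelations a b c d (e 1) (e 2)) {w z : R}
    (h : CubicRelations a' b' c' d' w z) (x y : ℤ) :
    (e.coordMatrix w z).det * cubicForm a' b' c' d' x y =
      cubicForm a b c d (x * e.coordMatrix w z 0 0 + y * e.coordMatrix w z 1 0)
        (x * e.coordMatrix w z 0 1 + y * e.coordMatrix w z 1 1) := by
  obtain ⟨hww, hzz, hwz⟩ := h
  obtain ⟨ww₁, ww₂⟩ := he.repr_mul he0 w w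
  obtain ⟨zz₁, zz₂⟩ := he.repr_mul he0 z z
  obtain ⟨wz₁, wz₂⟩ := he.repr_mul he0 w z
  rw [hww, ← he0] at ww₁ ww₂
  rw [hzz, ← he0] at zz₁ zz₂
  rw [hwz, ← he0] at wz₁ wz₂
  simp only [map_add, map_smul, Basis.repr_self, Finsupp.coe_add, Pi.add_apply, Finsupp.smul_apply,
    Finsupp.single_apply, Fin.reduceEq, if_false, smul_eq_mul, mul_zero, zero_add] at ww₁ ww₂ zz₁ zz₂ wz₁ wz₂
  rw [Basis.coordMatrix, Matrix.det_fin_two_of]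
  exact det_mul_cubicForm_of_coords (by linear_combination ww₁) (by linear_combination ww₂)
    (by linear_combination zz₁) (by linear_combination zz₂) wz₁ wz₂ x y

end CubicRelations

/-- Let `F, F'` be integral binary cubic forms with `R(F') ⊆ R(F)`.
Then there is a `2 × 2` integer matrix `δ` with `|det δ| = (R(F) : R(F'))` and
`F' = δ ⋅ F`, i.e. `(det δ) F'(u) = F(u δ)` for all `u`. -/
theorem cubic_subring_transform
    (R : Type*) [CommRing R] (S : Subring R)
    (a b c d a' b' c' d' : ℤ)
    (hF : IsCubicRingOf R a b c d) (hF' : IsCubicRingOf ↥S a' b' c' d') :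
    ∃ δ : Matrix (Fin 2) (Fin 2) ℤ,
      δ.det.natAbs = S.toAddSubgroup.index ∧
      ∀ u v : ℤ,
        δ.det * (a' * u ^ 3 + b' * u ^ 2 * v + c' * u * v ^ 2 + d' * v ^ 3)
          = a * (u * δ 0 0 + v * δ 1 0) ^ 3
            + b * (u * δ 0 0 + v * δ 1 0) ^ 2 * (u * δ 0 1 + v * δ 1 1)
            + c * (u * δ 0 0 + v * δ 1 0) * (u * δ 0 1 + v * δ 1 1) ^ 2
            + d * (u * δ 0 1 + v * δ 1 1) ^ 3 := by
  obtain ⟨e, he0, he⟩ := isCubicRingOf_iff.mp hF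
  obtain ⟨f, hf0, hf⟩ := isCubicRingOf_iff.mp hF'
  have hf0e : ((f 0 : S) : R) = e 0 := by rw [hf0, he0, Subring.coe_one]
  exact ⟨e.coordMatrix (f 1) (f 2),
    (S.toAddSubgroup.index_eq_natAbs_det_coordMatrix e f hf0e).symm,
    he.det_mul_cubicForm he0 (hf.map S.subtype)⟩
end

section
/- Let O be an order in an étale algebra k over ℚ with conductor f. The extension map a ↦ aO_k is a multiplicative bijection between the monoid of integral O-ideals relatively prime to f and the monoid of integral O_k-ideals relatively prime to f, with inverse the contraction map A ↦ A ∩ O. In particular, for γ ∈ O ∩ k^× with γO + f = O one has (γO_k) ∩ O = γO. -/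
namespace Ideal

theorem le_of_mul_le_of_sup_eq_top {R : Type*} [CommRing R] {I J K : Ideal R}
    (hIJ : I ⊔ J = ⊤) (hKJ : K * J ≤ I) : K ≤ I := by
  have h := sup_mul_eq_of_coprime_right (J := K) hIJ
  rw [sup_eq_left.mpr hKJ] at h
  exact sup_eq_left.mp h.symm

theorem comap_sup_of_subset_range {R S : Type*} [CommRing R] [CommRing S] (φ : R →+* S)
    (I : Ideal S) {J : Ideal S} (hJ : (J : Set S) ⊆ Set.range φ) :
    comap φ (I ⊔ J) = comap φ I ⊔ comap φ J := by
  refine le_antisymm (fun x hx => ?_) (sup_le (comap_mono le_sup_left) (comap_mono le_sup_right))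
  obtain ⟨y, hy, z, hz, hyz⟩ := Submodule.mem_sup.mp (mem_comap.mp hx)
  obtain ⟨z', rfl⟩ := hJ hz
  have hxz' : x - z' ∈ comap φ I := by
    rw [mem_comap, map_sub, ← hyz, add_sub_cancel_right]
    exact hy
  simpa using Submodule.add_mem_sup hxz' (mem_comap.mpr hz)

end Ideal

section Conductor

variable {k : Type*} [CommRing k] {A B : Subring k} (hAB : A ≤ B)

theorem conductorOf_subset_range :
    (conductorOf A B : Set ↥B) ⊆ Set.range (Subring.inclusion hAB) := fun x hx =>
  ⟨⟨x, by simpa using hx 1⟩, rfl⟩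

theorem comap_conductorOf :
    Ideal.comap (Subring.inclusion hAB) (conductorOf A B) = conductorIn A B hAB := rfl

theorem map_conductorIn_le :
    Ideal.map (Subring.inclusion hAB) (conductorIn A B hAB) ≤ conductorOf A B :=
  Ideal.map_le_iff_le_comap.mpr (comap_conductorOf hAB).ge

theorem exists_mem_eq_mul_of_mem_map (a : Ideal ↥A) {x : ↥B}
    (hx : x ∈ Ideal.map (Subring.inclusion hAB) a) {c : ↥A} (hc : c ∈ conductorIn A B hAB) :
    ∃ w ∈ a, (w : k) = x * c := by
  induction hx using Submodule.span_induction generalizing c with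
  | mem z hz =>
    obtain ⟨w, hw, rfl⟩ := hz
    exact ⟨w * c, a.mul_mem_right c hw, rfl⟩
  | zero => exact ⟨0, a.zero_mem, by simp⟩
  | add x y _ _ ihx ihy =>
    obtain ⟨w₁, hw₁, e₁⟩ := ihx hc
    obtain ⟨w₂, hw₂, e₂⟩ := ihy hc
    exact ⟨w₁ + w₂, a.add_mem hw₁ hw₂, by push_cast [e₁, e₂]; ring⟩
  | smul r x _ ih =>
    -- `c r` lies in `A` and is again in the conductor, so it absorbs the coefficient `r`.
    have hcr : (⟨c * r, hc r⟩ : ↥A) ∈ conductorIn A B hAB := fun y => by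
      simpa [mul_assoc] using hc (r * y)
    obtain ⟨w, hw, e⟩ := ih hcr
    exact ⟨w, hw, by rw [e, smul_eq_mul, Subring.coe_mul]; ring⟩

theorem comap_map_mul_conductorIn_le (a : Ideal ↥A) :
    Ideal.comap (Subring.inclusion hAB) (Ideal.map (Subring.inclusion hAB) a) *
      conductorIn A B hAB ≤ a := by
  refine Ideal.mul_le.mpr fun x hx c hc => ?_
  obtain ⟨w, hw, e⟩ := exists_mem_eq_mul_of_mem_map hAB a (Ideal.mem_comap.mp hx) hc
  rwa [show x * c = w from Subtype.ext e.symm]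

theorem comap_map_of_sup_conductorIn_eq_top {a : Ideal ↥A}
    (ha : a ⊔ conductorIn A B hAB = ⊤) :
    Ideal.comap (Subring.inclusion hAB) (Ideal.map (Subring.inclusion hAB) a) = a :=
  le_antisymm (Ideal.le_of_mul_le_of_sup_eq_top ha (comap_map_mul_conductorIn_le hAB a))
    Ideal.le_comap_map

theorem map_sup_conductorOf_eq_top {a : Ideal ↥A} (ha : a ⊔ conductorIn A B hAB = ⊤) :
    Ideal.map (Subring.inclusion hAB) a ⊔ conductorOf A B = ⊤ := by
  refine top_le_iff.mp ?_
  calc ⊤ = Ideal.map (Subring.inclusion hAB) (a ⊔ conductorIn A B hAB) := by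
        rw [ha, Ideal.map_top]
    _ ≤ Ideal.map (Subring.inclusion hAB) a ⊔ conductorOf A B := by
        rw [Ideal.map_sup]
        exact sup_le_sup_left (map_conductorIn_le hAB) _

theorem comap_sup_conductorIn_eq_top {I : Ideal ↥B} (hI : I ⊔ conductorOf A B = ⊤) :
    Ideal.comap (Subring.inclusion hAB) I ⊔ conductorIn A B hAB = ⊤ := by
  rw [← comap_conductorOf hAB, ← Ideal.comap_sup_of_subset_range _ _
    (conductorOf_subset_range hAB), hI, Ideal.comap_top]

theorem map_comap_of_sup_conductorOf_eq_top {I : Ideal ↥B} (hI : I ⊔ conductorOf A B = ⊤) :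
    Ideal.map (Subring.inclusion hAB) (Ideal.comap (Subring.inclusion hAB) I) = I := by
  refine le_antisymm Ideal.map_comap_le
    (Ideal.le_of_mul_le_of_sup_eq_top
      (map_sup_conductorOf_eq_top hAB (comap_sup_conductorIn_eq_top hAB hI)) ?_)
  -- the conductor lies inside `A`, so `I ∩ f` is already the image of `I ∩ A`
  refine Ideal.mul_le_inf.trans fun x ⟨hxI, hxF⟩ => ?_
  obtain ⟨y, rfl⟩ := conductorOf_subset_range hAB hxF
  exact Ideal.mem_map_of_mem _ (Ideal.mem_comap.mpr hxI)

end Conductor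

/-- **Dedekind.** Let `O` be an order with conductor `f` in an étale algebra
`k` over `ℚ`.  Extension `a ↦ a O_k` is a multiplicative bijection between integral
`O`-ideals prime to `f` and integral `O_k`-ideals prime to `f`, with inverse contraction
`A ↦ A ∩ O`.  In particular, for `γ ∈ O ∩ k^×` with `γO + f = O`, one has
`(γ O_k) ∩ O = γ O`. -/
theorem extension_contraction_bijection
    (k : Type*) [CommRing k] [Algebra ℚ k] [FiniteDimensional ℚ k] [IsReduced k]
    (O : Subring k) (hO : IsOrder k O) :
    (∀ a : Ideal ↥O, a ⊔ conductorIn O (maximalOrder k) hO.1 = ⊤ →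
      Ideal.comap (Subring.inclusion hO.1) (Ideal.map (Subring.inclusion hO.1) a) = a ∧
      Ideal.map (Subring.inclusion hO.1) a ⊔ conductorOf O (maximalOrder k) = ⊤) ∧
    (∀ A : Ideal ↥(maximalOrder k), A ⊔ conductorOf O (maximalOrder k) = ⊤ →
      Ideal.map (Subring.inclusion hO.1) (Ideal.comap (Subring.inclusion hO.1) A) = A ∧
      Ideal.comap (Subring.inclusion hO.1) A ⊔ conductorIn O (maximalOrder k) hO.1 = ⊤) ∧
    (∀ a b : Ideal ↥O,
      Ideal.map (Subring.inclusion hO.1) (a * b)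
        = Ideal.map (Subring.inclusion hO.1) a * Ideal.map (Subring.inclusion hO.1) b) ∧
    (∀ γ : ↥O, IsUnit (γ : k) →
      Ideal.span {γ} ⊔ conductorIn O (maximalOrder k) hO.1 = ⊤ →
      Ideal.comap (Subring.inclusion hO.1) (Ideal.span {Subring.inclusion hO.1 γ})
        = Ideal.span {γ}) := by
  refine ⟨fun a ha => ⟨comap_map_of_sup_conductorIn_eq_top hO.1 ha,
      map_sup_conductorOf_eq_top hO.1 ha⟩,
    fun A hA => ⟨map_comap_of_sup_conductorOf_eq_top hO.1 hA,
      comap_sup_conductorIn_eq_top hO.1 hA⟩,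
    fun a b => Ideal.map_mul _ a b, fun γ _ hγ => ?_⟩
  simpa [Ideal.map_span] using comap_map_of_sup_conductorIn_eq_top hO.1 hγ
end
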